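/- Let λ : (0, ∞) → (0, 1/8) satisfy 1/A + 1/(A(A+1)) < λ(A) < 1/A + (1 + √(4A+1))/(2A²) for all sufficiently large A; set ξ_A = √(1 − 8λ(A)) and let C_A = ((1 − ξ_A)/(2·Γ(1 − ξ_A))) · (A/2)^{(1+ξ_A)/2} · Γ((1 − ξ_A)/2) · ₁F₁[−(1 + ξ_A)/2; 1 − ξ_A; 2/A]. Fix a real s < 1 with s ≠ 0 and define F_A(s) = (2λ(A) A^s)/(s(s−1) + 2λ(A)) · ₂F₂[1, −s; 3/2 + ξ_A/2 − s, 3/2 − ξ_A/2 − s; 2/A] + C_A · 2^s · Γ(1/2 + ξ_A/2 − s) · Γ(1/2 − ξ_A/2 − s) / Γ(−s). Then F_A(s) → 2^s · Γ(1 − s) as A → +∞; i.e., the s-th fractional moment of the quasi-stationary distribution converges to the s-th fractional moment of the stationary distribution of the Shiryaev diffusion. -/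

import Mathlib

/-- The Pochhammer symbol (rising factorial): `(z)₀ = 1`, `(z)_{n+1} = (z)_n · (z + n)`. -/
noncomputable def poch (z : ℝ) : ℕ → ℝ
  | 0 => 1
  | n + 1 => poch z n * (z + (n : ℝ))

/-- The generalized hypergeometric series `₂F₂[a₁,a₂; b₁,b₂; z]`. -/
noncomputable def F22 (a₁ a₂ b₁ b₂ z : ℝ) : ℝ :=
  ∑' n : ℕ, poch a₁ n * poch a₂ n / (poch b₁ n * poch b₂ n) * z ^ n / (Nat.factorial n : ℝ)

/-- The confluent hypergeometric (Kummer) series `₁F₁[a; b; z]`. -/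
noncomputable def F11 (a b z : ℝ) : ℝ :=
  ∑' n : ℕ, poch a n / poch b n * z ^ n / (Nat.factorial n : ℝ)

open Filter Real

set_option maxHeartbeats 2000000


lemma poch_zero (z : ℝ) : poch z 0 = 1 := rfl

lemma poch_succ (z : ℝ) (n : ℕ) : poch z (n + 1) = poch z n * (z + n) := rfl

lemma poch_pos {z : ℝ} (hz : 0 < z) : ∀ n, 0 < poch z n
  | 0 => one_pos
  | n + 1 => mul_pos (poch_pos hz n) (by positivity)

lemma poch_mono {a b : ℝ} (ha : 0 < a) (hab : a ≤ b) : ∀ n, poch a n ≤ poch b n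
  | 0 => le_refl 1
  | n + 1 => by
    have h1 := poch_pos ha n
    have h2 : (0:ℝ) < a + n := by positivity
    exact mul_le_mul (poch_mono ha hab n) (by linarith) h2.le
      (poch_pos (lt_of_lt_of_le ha hab) n).le

lemma poch_one : ∀ n, poch 1 n = (Nat.factorial n : ℝ)
  | 0 => by simp [poch_zero]
  | n + 1 => by
    rw [poch_succ, poch_one n, Nat.factorial_succ]
    push_cast; ring

lemma poch_succ_left (z : ℝ) : ∀ n, poch z (n + 1) = z * poch (z + 1) n
  | 0 => by simp [poch_zero, poch_succ]
  | n + 1 => by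
    rw [poch_succ, poch_succ_left z n, poch_succ]
    push_cast; ring

lemma le_poch {a : ℝ} (ha : 0 < a) : ∀ n, min 1 a ≤ poch a n
  | 0 => min_le_left 1 a
  | 1 => by
    rw [poch_succ, poch_zero]
    simpa using min_le_right 1 a
  | n + 2 => by
    rw [poch_succ]
    have h1 := le_poch ha (n+1)
    have h2 : (1:ℝ) ≤ a + (n+1 : ℕ) := by push_cast; linarith [Nat.cast_nonneg (α := ℝ) n]
    nlinarith [poch_pos ha (n+1), lt_min one_pos ha]

lemma F22_bound {s : ℝ} (hs : s < 1) : ∃ M : ℝ, 0 ≤ M ∧ ∀ b₁ b₂ z : ℝ,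
    1 - s ≤ b₁ → 1 - s ≤ b₂ → 0 ≤ z → z ≤ 1/2 → |F22 1 (-s) b₁ b₂ z| ≤ M := by
  have h1s : (0:ℝ) < 1 - s := by linarith
  set c : ℝ := min 1 (1-s) with hc
  have hc0 : 0 < c := lt_min one_pos h1s
  set D : ℝ := max 1 (|s| / (c * (1-s)^2)) with hD
  have hD1 : (1:ℝ) ≤ D := le_max_left _ _
  have hD0 : (0:ℝ) ≤ D := by linarith
  have hsD : |s| ≤ D * (c * (1-s)^2) := by
    have := le_max_right 1 (|s| / (c * (1-s)^2))
    have hpos : (0:ℝ) < c * (1-s)^2 := by positivity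
    calc |s| = |s| / (c * (1-s)^2) * (c * (1-s)^2) := by field_simp
    _ ≤ D * (c * (1-s)^2) := by
        exact mul_le_mul_of_nonneg_right this hpos.le
  refine ⟨D * 2, by positivity, fun b₁ b₂ z hb₁ hb₂ hz0 hz2 => ?_⟩
  have hb₁0 : (0:ℝ) < b₁ := lt_of_lt_of_le h1s hb₁
  have hb₂0 : (0:ℝ) < b₂ := lt_of_lt_of_le h1s hb₂
  -- termwise bound
  have key : ∀ n : ℕ, |poch 1 n * poch (-s) n / (poch b₁ n * poch b₂ n) * z ^ n /
      (Nat.factorial n : ℝ)| ≤ D * (1/2)^n := by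
    intro n
    have hp₁ : 0 < poch b₁ n := poch_pos hb₁0 n
    have hp₂ : 0 < poch b₂ n := poch_pos hb₂0 n
    have hfac : (0:ℝ) < (Nat.factorial n : ℝ) := by
      exact_mod_cast Nat.factorial_pos n
    have habs : |poch 1 n * poch (-s) n / (poch b₁ n * poch b₂ n) * z ^ n /
        (Nat.factorial n : ℝ)| = |poch (-s) n| * z ^ n / (poch b₁ n * poch b₂ n) := by
      rw [poch_one]
      simp only [abs_div, abs_mul, abs_of_nonneg hfac.le,
        abs_of_nonneg (pow_nonneg hz0 n), abs_of_nonneg hp₁.le, abs_of_nonneg hp₂.le]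
      field_simp
    rw [habs]
    rw [div_le_iff₀ (mul_pos hp₁ hp₂)]
    -- now polynomial inequality
    match n with
    | 0 =>
      simp only [poch_zero, pow_zero, abs_one]
      nlinarith
    | (m+1) =>
      have hX : poch (-s) (m+1) = (-s) * poch (1-s) m := by
        rw [poch_succ_left, show -s + 1 = 1 - s by ring]
      set Q : ℝ := poch (1-s) m with hQ
      have hQ0 : 0 < Q := poch_pos h1s m
      have hQc : c ≤ Q := le_poch h1s m
      set r : ℝ := 1 - s + m with hr
      have hr0 : 1 - s ≤ r := by
        rw [hr]; linarith [Nat.cast_nonneg (α := ℝ) m]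
      have hQr : poch (1-s) (m+1) = Q * r := by rw [poch_succ, hQ, hr]
      have hpQr₁ : Q * r ≤ poch b₁ (m+1) := by
        rw [← hQr]; exact poch_mono h1s hb₁ (m+1)
      have hpQr₂ : Q * r ≤ poch b₂ (m+1) := by
        rw [← hQr]; exact poch_mono h1s hb₂ (m+1)
      have hQrpos : 0 < Q * r := by
        have : (0:ℝ) < r := lt_of_lt_of_le h1s hr0
        positivity
      have hXabs : |poch (-s) (m+1)| = |s| * Q := by
        rw [hX, abs_mul, abs_neg, abs_of_nonneg hQ0.le]
      rw [hXabs]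
      have hzb : z^(m+1) ≤ (1/2:ℝ)^(m+1) := pow_le_pow_left₀ hz0 hz2 (m+1)
      have hz0' : (0:ℝ) ≤ z^(m+1) := pow_nonneg hz0 _
      have h2p : (0:ℝ) < (1/2:ℝ)^(m+1) := by positivity
      -- |s| * Q * z^(m+1) ≤ D * (1/2)^(m+1) * (p₁ * p₂)
      calc |s| * Q * z^(m+1) ≤ (D * (c * (1-s)^2)) * Q * (1/2)^(m+1) := by
            have h1 : |s| * Q ≤ (D * (c * (1-s)^2)) * Q :=
              mul_le_mul_of_nonneg_right hsD hQ0.le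
            calc |s| * Q * z^(m+1) ≤ |s| * Q * (1/2)^(m+1) :=
                  mul_le_mul_of_nonneg_left hzb (by positivity)
            _ ≤ (D * (c * (1-s)^2)) * Q * (1/2)^(m+1) :=
                  mul_le_mul_of_nonneg_right h1 h2p.le
      _ ≤ D * ((Q*r) * (Q*r)) * (1/2)^(m+1) := by
            have h2 : c * (1-s)^2 * Q ≤ (Q*r)*(Q*r) := by
              have hrr : (1-s)^2 ≤ r^2 := pow_le_pow_left₀ h1s.le hr0 2
              have h2a : c * (1-s)^2 ≤ Q * r^2 := mul_le_mul hQc hrr (by positivity) hQ0.le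
              nlinarith [mul_le_mul_of_nonneg_right h2a hQ0.le]
            calc (D * (c * (1-s)^2)) * Q * (1/2)^(m+1)
                = D * (c * (1-s)^2 * Q) * (1/2)^(m+1) := by ring
            _ ≤ D * ((Q*r)*(Q*r)) * (1/2)^(m+1) := by
                  apply mul_le_mul_of_nonneg_right _ h2p.le
                  exact mul_le_mul_of_nonneg_left h2 hD0
      _ ≤ D * (1/2)^(m+1) * (poch b₁ (m+1) * poch b₂ (m+1)) := by
            have hp₁' : 0 < poch b₁ (m+1) := poch_pos hb₁0 (m+1)
            have h3 : (Q*r)*(Q*r) ≤ poch b₁ (m+1) * poch b₂ (m+1) :=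
              mul_le_mul hpQr₁ hpQr₂ hQrpos.le hp₁'.le
            calc D * ((Q*r)*(Q*r)) * (1/2)^(m+1)
                = D * (1/2)^(m+1) * ((Q*r)*(Q*r)) := by ring
            _ ≤ D * (1/2)^(m+1) * (poch b₁ (m+1) * poch b₂ (m+1)) := by
                  exact mul_le_mul_of_nonneg_left h3 (by positivity)
  have hgeo : HasSum (fun n : ℕ => D * (1/2:ℝ)^n) (D * 2) := by
    have heq : (D * 2) = D * ((1:ℝ) - 1/2)⁻¹ := by norm_num
    rw [heq]
    exact (hasSum_geometric_of_lt_one (by norm_num : (0:ℝ) ≤ 1/2)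
      (by norm_num : (1/2:ℝ) < 1)).mul_left D
  have := tsum_of_norm_bounded hgeo (fun n => by
    rw [Real.norm_eq_abs]; exact key n)
  rw [Real.norm_eq_abs] at this
  exact this

lemma F11_approx {e z : ℝ} (he : 0 < e) (he1 : e < 1) (hz : 0 < z) (hz2 : z ≤ 1/2) :
    |F11 (-1 + e/2) e z - (1 + (-1 + e/2)/e * z)| ≤ z^2 := by
  set a : ℝ := -1 + e/2 with ha
  set f : ℕ → ℝ := fun n => poch a n / poch e n * z ^ n / (Nat.factorial n : ℝ) with hf
  have hf0 : f 0 = 1 := by simp [hf, poch_zero]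
  have hf1 : f 1 = a / e * z := by
    simp [hf, poch_succ, poch_zero, Nat.factorial]
  -- bound on shifted terms
  have key : ∀ n : ℕ, |f (n+2)| ≤ z^2/2 * z^n := by
    intro n
    have h1 : poch a (n+2) = -((1 - e/2) * (e/2) * poch (1+e/2) n) := by
      rw [show n+2 = (n+1)+1 from rfl, poch_succ_left, show a + 1 = e/2 by rw [ha]; ring,
        poch_succ_left, show e/2 + 1 = 1 + e/2 by ring, ha]
      ring
    have h2 : poch e (n+2) = e * (e+1) * poch (e+2) n := by
      rw [show n+2 = (n+1)+1 from rfl, poch_succ_left, poch_succ_left,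
        show e + 1 + 1 = e + 2 by ring]
      ring
    have hP : 0 < poch (1+e/2) n := poch_pos (by linarith) n
    have hR : 0 < poch (e+2) n := poch_pos (by linarith) n
    have hPR : poch (1+e/2) n ≤ poch (e+2) n := poch_mono (by linarith) (by linarith) n
    have hfac : (1:ℝ) ≤ (Nat.factorial (n+2) : ℝ) := by
      exact_mod_cast Nat.one_le_iff_ne_zero.mpr (Nat.factorial_pos (n+2)).ne'
    have hfx : f (n+2) = -((1 - e/2) * (e/2) * poch (1+e/2) n / (e * (e+1) * poch (e+2) n)
        * z^(n+2) / (Nat.factorial (n+2) : ℝ)) := by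
      simp only [hf]
      rw [h1, h2]
      ring
    have h12 : (0:ℝ) ≤ 1 - e/2 := by linarith
    have hden0 : 0 < e * (e+1) * poch (e+2) n := mul_pos (mul_pos he (by linarith)) hR
    have hXnn : 0 ≤ (1 - e/2) * (e/2) * poch (1+e/2) n / (e * (e+1) * poch (e+2) n) :=
      div_nonneg (mul_nonneg (mul_nonneg h12 (by linarith)) hP.le) hden0.le
    rw [hfx, abs_neg, abs_of_nonneg (div_nonneg (mul_nonneg hXnn (pow_nonneg hz.le _))
      (by linarith : (0:ℝ) ≤ (Nat.factorial (n+2) : ℝ)))]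
    have hratio : (1 - e/2) * (e/2) * poch (1+e/2) n / (e * (e+1) * poch (e+2) n) ≤ 1/2 := by
      have t1 : e/2 * poch (1+e/2) n ≤ e/2 * poch (e+2) n :=
        mul_le_mul_of_nonneg_left hPR (by linarith)
      have t2 : (1-e/2) * ((e/2) * poch (1+e/2) n) ≤ 1 * ((e/2) * poch (1+e/2) n) :=
        mul_le_mul_of_nonneg_right (by linarith) (mul_nonneg (by linarith) hP.le)
      have hnum : (1 - e/2) * (e/2) * poch (1+e/2) n ≤ e/2 * poch (e+2) n := by nlinarith
      have hden : e * poch (e+2) n ≤ e * (e+1) * poch (e+2) n := by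
        nlinarith [mul_pos he hR]
      have hdd := div_le_div₀ (by positivity) hnum (mul_pos he hR) hden
      calc (1 - e/2) * (e/2) * poch (1+e/2) n / (e * (e+1) * poch (e+2) n)
          ≤ e/2 * poch (e+2) n / (e * poch (e+2) n) := hdd
      _ = 1/2 := by
          field_simp
    calc (1 - e/2) * (e/2) * poch (1+e/2) n / (e * (e+1) * poch (e+2) n)
        * z^(n+2) / (Nat.factorial (n+2) : ℝ)
        ≤ (1 - e/2) * (e/2) * poch (1+e/2) n / (e * (e+1) * poch (e+2) n) * z^(n+2) :=
          div_le_self (mul_nonneg hXnn (pow_nonneg hz.le _)) hfac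
    _ ≤ 1/2 * z^(n+2) := mul_le_mul_of_nonneg_right hratio (by positivity)
    _ = z^2/2 * z^n := by rw [pow_add]; ring
  -- summability
  have hgeo : HasSum (fun n : ℕ => z^2/2 * z^n) (z^2/2 * (1-z)⁻¹) :=
    (hasSum_geometric_of_lt_one hz.le (by linarith)).mul_left _
  have hsum2 : Summable (fun n : ℕ => f (n+2)) :=
    Summable.of_norm_bounded hgeo.summable (fun n => by
      rw [Real.norm_eq_abs]; exact key n)
  have hsumf : Summable f := (summable_nat_add_iff 2).mp hsum2
  have hsumf1 : Summable (fun n => f (n+1)) := (summable_nat_add_iff 1).mpr hsumf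
  have hsplit : F11 a e z = f 0 + (f 1 + ∑' n : ℕ, f (n+2)) := by
    have e1 : F11 a e z = ∑' n, f n := rfl
    rw [e1, Summable.tsum_eq_zero_add hsumf, Summable.tsum_eq_zero_add hsumf1]
  have htail : |∑' n : ℕ, f (n+2)| ≤ z^2 := by
    have h := tsum_of_norm_bounded hgeo (fun n => by rw [Real.norm_eq_abs]; exact key n)
    rw [Real.norm_eq_abs] at h
    have hinv : (1-z)⁻¹ ≤ 2 := by
      rw [show (2:ℝ) = (1/2:ℝ)⁻¹ by norm_num]
      exact inv_anti₀ (by norm_num) (by linarith)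
    calc |∑' n : ℕ, f (n+2)| ≤ z^2/2 * (1-z)⁻¹ := h
    _ ≤ z^2/2 * 2 := by nlinarith
    _ = z^2 := by ring
  rw [hsplit, hf0, hf1]
  calc |1 + (a / e * z + ∑' n : ℕ, f (n+2)) - (1 + a/e * z)| = |∑' n : ℕ, f (n+2)| := by
        congr 1; ring
  _ ≤ z^2 := htail

lemma algebra_C (e A rp G1 G2 f : ℝ) (he : e ≠ 0) (hG1 : G1 ≠ 0) :
    e / (2 * (G1 / e)) * (A / 2 * rp) * (G2 / (e / 2)) * f
      = e * A / 2 * rp * (G2 / G1) * f := by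
  field_simp

/-- For fixed `s < 1`, `s ≠ 0`, the `s`-th fractional moment `F_A(s)` of the quasi-stationary
distribution of the Shiryaev diffusion on `[0,A]` (given by the explicit formula) converges,
as `A → +∞`, to `2^s·Γ(1−s)`, the `s`-th fractional moment of the stationary distribution. -/
theorem fractional_moment_limit
    (lam : ℝ → ℝ)
    (h0 : ∀ A : ℝ, 0 < A → lam A ∈ Set.Ioo (0 : ℝ) (1/8))
    (hb : ∀ᶠ A in Filter.atTop,
      1 / A + 1 / (A * (A + 1)) < lam A ∧
        lam A < 1 / A + (1 + Real.sqrt (4 * A + 1)) / (2 * A ^ 2))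
    (ξ : ℝ → ℝ) (hξ : ∀ A : ℝ, ξ A = Real.sqrt (1 - 8 * lam A))
    (C : ℝ → ℝ)
    (hC : ∀ A : ℝ, C A =
      ((1 - ξ A) / (2 * Real.Gamma (1 - ξ A))) * (A / 2) ^ ((1 + ξ A) / 2) *
        Real.Gamma ((1 - ξ A) / 2) * F11 (-(1 + ξ A) / 2) (1 - ξ A) (2 / A))
    (s : ℝ) (hs : s < 1) (hs0 : s ≠ 0)
    (F : ℝ → ℝ → ℝ)
    (hF : ∀ A : ℝ, F A s =
      (2 * lam A * A ^ s) / (s * (s - 1) + 2 * lam A) *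
          F22 1 (-s) (3/2 + ξ A/2 - s) (3/2 - ξ A/2 - s) (2 / A) +
        C A * 2 ^ s * Real.Gamma (1/2 + ξ A/2 - s) * Real.Gamma (1/2 - ξ A/2 - s) /
          Real.Gamma (-s)) :
    Filter.Tendsto (fun A : ℝ => F A s) Filter.atTop
      (nhds (2 ^ s * Real.Gamma (1 - s))) := by
  have h1s : (0:ℝ) < 1 - s := by linarith
  -- pointwise facts on a good region
  have hgood : ∀ A : ℝ, 25 ≤ A → 0 < A ∧ 0 < lam A ∧ lam A < 1/8 ∧
      0 < ξ A ∧ ξ A < 1 ∧ ξ A ^ 2 = 1 - 8 * lam A := by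
    intro A hA
    have hA0 : (0:ℝ) < A := by linarith
    obtain ⟨hl0, hl8⟩ := h0 A hA0
    have h18 : (0:ℝ) < 1 - 8 * lam A := by linarith
    have hxp : 0 < ξ A := by rw [hξ]; exact Real.sqrt_pos.mpr h18
    have hxl : ξ A < 1 := by
      rw [hξ]
      have h := Real.sqrt_lt_sqrt h18.le (show 1-8*lam A < 1 by linarith)
      rwa [Real.sqrt_one] at h
    have hxsq : ξ A ^ 2 = 1 - 8 * lam A := by rw [hξ]; exact Real.sq_sqrt h18.le
    exact ⟨hA0, hl0, hl8, hxp, hxl, hxsq⟩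
  -- Tendsto lam*A → 1
  have hL : Filter.Tendsto (fun A => lam A * A) Filter.atTop (nhds 1) := by
    have hl : Filter.Tendsto (fun A : ℝ => 1 + (A+1)⁻¹) Filter.atTop (nhds 1) := by
      have : Filter.Tendsto (fun A : ℝ => (A+1)⁻¹) Filter.atTop (nhds 0) :=
        tendsto_inv_atTop_zero.comp (tendsto_atTop_add_const_right _ 1 tendsto_id)
      simpa using tendsto_const_nhds.add this
    have hu : Filter.Tendsto (fun A : ℝ => 1 + ((1/2)*A⁻¹ + (1/2)*A^(-(1/4):ℝ)))
        Filter.atTop (nhds 1) := by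
      have h1 : Filter.Tendsto (fun A : ℝ => (1/2)*A⁻¹) Filter.atTop (nhds 0) := by
        simpa using tendsto_inv_atTop_zero.const_mul (1/2 : ℝ)
      have h2 : Filter.Tendsto (fun A : ℝ => (1/2)*A^(-(1/4):ℝ)) Filter.atTop (nhds 0) := by
        simpa using (tendsto_rpow_neg_atTop (by norm_num : (0:ℝ) < 1/4)).const_mul (1/2 : ℝ)
      simpa using tendsto_const_nhds.add (h1.add h2)
    apply tendsto_of_tendsto_of_tendsto_of_le_of_le' hl hu
    · filter_upwards [hb, Filter.eventually_ge_atTop (25:ℝ)] with A hbA hA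
      obtain ⟨hA0, hl0, hl8, hxp, hxl, hxsq⟩ := hgood A hA
      have := mul_lt_mul_of_pos_right hbA.1 hA0
      have heq : (1/A + 1/(A*(A+1))) * A = 1 + (A+1)⁻¹ := by
        field_simp
      linarith [heq ▸ this]
    · filter_upwards [hb, Filter.eventually_ge_atTop (25:ℝ)] with A hbA hA
      obtain ⟨hA0, hl0, hl8, hxp, hxl, hxsq⟩ := hgood A hA
      have hup := mul_lt_mul_of_pos_right hbA.2 hA0
      have heq : (1/A + (1 + Real.sqrt (4*A+1))/(2*A^2)) * A
          = 1 + (1 + Real.sqrt (4*A+1))/(2*A) := by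
        field_simp
      rw [heq] at hup
      -- now bound sqrt(4A+1) ≤ A^(3/4)
      have hsA : (5:ℝ) ≤ Real.sqrt A := by
        rw [show (5:ℝ) = Real.sqrt 25 by
          rw [show (25:ℝ) = 5^2 by norm_num, Real.sqrt_sq (by norm_num)]]
        exact Real.sqrt_le_sqrt hA
      have h32 : (4*A+1) ≤ A ^ ((3:ℝ)/2) := by
        have : A ^ ((3:ℝ)/2) = A * Real.sqrt A := by
          rw [show (3:ℝ)/2 = 1 + 1/2 by norm_num, Real.rpow_add hA0, Real.rpow_one,
            ← Real.sqrt_eq_rpow]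
        rw [this]
        nlinarith
      have hsqrt : Real.sqrt (4*A+1) ≤ A ^ ((3:ℝ)/4) := by
        have h1 : Real.sqrt (4*A+1) ≤ Real.sqrt (A ^ ((3:ℝ)/2)) := Real.sqrt_le_sqrt h32
        have h2 : Real.sqrt (A ^ ((3:ℝ)/2)) = A ^ ((3:ℝ)/4) := by
          rw [Real.sqrt_eq_rpow, ← Real.rpow_mul hA0.le]
          norm_num
        rw [h2] at h1; exact h1
      have hfrac : (1 + Real.sqrt (4*A+1))/(2*A) ≤ (1/2)*A⁻¹ + (1/2)*A^(-(1/4):ℝ) := by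
        have hA34 : A ^ ((3:ℝ)/4) = A * A^(-(1/4):ℝ) := by
          have h := Real.rpow_add hA0 1 (-(1/4):ℝ)
          rw [Real.rpow_one] at h
          rw [show (3:ℝ)/4 = 1 + (-(1/4)) by norm_num, h]
        have : (1 + Real.sqrt (4*A+1))/(2*A) ≤ (1 + A ^ ((3:ℝ)/4))/(2*A) := by
          exact (div_le_div_iff_of_pos_right (by linarith : (0:ℝ) < 2*A)).mpr (by linarith)
        apply this.trans
        rw [hA34]
        rw [div_le_iff₀ (by linarith : (0:ℝ) < 2*A)]
        nlinarith [inv_mul_cancel₀ hA0.ne', Real.rpow_nonneg hA0.le (-(1/4):ℝ)]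
      linarith
  -- lam → 0
  have hlam0 : Filter.Tendsto lam Filter.atTop (nhds 0) := by
    have h := hL.mul tendsto_inv_atTop_zero
    rw [mul_zero] at h
    apply h.congr'
    filter_upwards [Filter.eventually_ge_atTop (25:ℝ)] with A hA
    have hA0 : (0:ℝ) < A := by linarith
    field_simp
  -- ξ → 1
  have hxi1 : Filter.Tendsto ξ Filter.atTop (nhds 1) := by
    have hin : Filter.Tendsto (fun A => 1 - 8 * lam A) Filter.atTop (nhds 1) := by
      have h8 : Filter.Tendsto (fun A => 8 * lam A) Filter.atTop (nhds 0) := by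
        simpa using hlam0.const_mul (8:ℝ)
      have h := Filter.Tendsto.sub
        (tendsto_const_nhds : Filter.Tendsto (fun _ : ℝ => (1:ℝ)) Filter.atTop (nhds 1)) h8
      simpa using h
    have := (Real.continuous_sqrt.tendsto 1).comp hin
    rw [Real.sqrt_one] at this
    exact this.congr (fun A => (hξ A).symm)
  -- (1-ξ) → 0
  have he0 : Filter.Tendsto (fun A => 1 - ξ A) Filter.atTop (nhds 0) := by
    have h := Filter.Tendsto.sub
      (tendsto_const_nhds : Filter.Tendsto (fun _ : ℝ => (1:ℝ)) Filter.atTop (nhds 1)) hxi1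
    simpa using h
  -- (1-ξ)·A → 4
  have heA4 : Filter.Tendsto (fun A => (1 - ξ A) * A) Filter.atTop (nhds 4) := by
    have hq : Filter.Tendsto (fun A => 8 * (lam A * A) / (1 + ξ A)) Filter.atTop
        (nhds 4) := by
      have h1 : Filter.Tendsto (fun A => 8 * (lam A * A)) Filter.atTop (nhds 8) := by
        have := hL.const_mul (8:ℝ)
        norm_num at this
        exact this
      have h2 : Filter.Tendsto (fun A => 1 + ξ A) Filter.atTop (nhds 2) := by
        have h := Filter.Tendsto.add
          (tendsto_const_nhds : Filter.Tendsto (fun _ : ℝ => (1:ℝ)) Filter.atTop (nhds 1)) hxi1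
        norm_num at h
        exact h
      have := h1.div h2 (by norm_num)
      norm_num at this
      exact this
    apply hq.congr'
    filter_upwards [Filter.eventually_ge_atTop (25:ℝ)] with A hA
    obtain ⟨hA0, hl0, hl8, hxp, hxl, hxsq⟩ := hgood A hA
    have h1x : (0:ℝ) < 1 + ξ A := by linarith
    rw [div_eq_iff h1x.ne']
    linear_combination A * hxsq
  -- (A/2)^(-(1-ξ)/2) → 1
  have hrpow1 : Filter.Tendsto (fun A : ℝ => (A/2) ^ (-((1 - ξ A)/2))) Filter.atTop
      (nhds 1) := by
    have hlogdiv : Filter.Tendsto (fun A : ℝ => Real.log (A/2) / A) Filter.atTop (nhds 0) := by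
      have T0 : Filter.Tendsto (fun x : ℝ => Real.log x / x) Filter.atTop (nhds 0) := by
        have := Real.isLittleO_log_id_atTop.tendsto_div_nhds_zero
        simpa using this
      have hhalf : Filter.Tendsto (fun A : ℝ => A/2) Filter.atTop Filter.atTop :=
        Filter.tendsto_id.atTop_div_const (by norm_num)
      have h := (T0.comp hhalf).div_const (2:ℝ)
      norm_num at h
      apply h.congr
      intro A
      show Real.log (A/2) / (A/2) / 2 = _
      rw [div_div]
      congr 1
      ring
    have hexp : Filter.Tendsto (fun A : ℝ => Real.log (A/2) * (-((1 - ξ A)/2)))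
        Filter.atTop (nhds 0) := by
      have h := (heA4.const_mul (-(1/2) : ℝ)).mul hlogdiv
      norm_num at h
      apply h.congr'
      filter_upwards [Filter.eventually_ge_atTop (25:ℝ)] with A hA
      have hA0 : (0:ℝ) < A := by linarith
      field_simp
    have h := (Real.continuous_exp.tendsto 0).comp hexp
    rw [Real.exp_zero] at h
    apply h.congr'
    filter_upwards [Filter.eventually_ge_atTop (25:ℝ)] with A hA
    have hA20 : (0:ℝ) < A/2 := by linarith
    simp only [Function.comp]
    rw [Real.rpow_def_of_pos hA20]
  -- Gamma ratio → 1
  have hGam1 : ContinuousAt Real.Gamma 1 :=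
    (Real.differentiableAt_Gamma (fun m => by
      have hm : (0:ℝ) ≤ m := Nat.cast_nonneg m
      exact (show -(m:ℝ) < 1 by linarith).ne')).continuousAt
  have hGr : Filter.Tendsto (fun A => Real.Gamma (1 + (1 - ξ A)/2) /
      Real.Gamma (1 + (1 - ξ A))) Filter.atTop (nhds 1) := by
    have h1 : Filter.Tendsto (fun A => 1 + (1 - ξ A)/2) Filter.atTop (nhds 1) := by
      have h := Filter.Tendsto.add
        (tendsto_const_nhds : Filter.Tendsto (fun _ : ℝ => (1:ℝ)) Filter.atTop (nhds 1))
        (he0.div_const 2)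
      norm_num at h
      exact h
    have h2 : Filter.Tendsto (fun A => 1 + (1 - ξ A)) Filter.atTop (nhds 1) := by
      have h := Filter.Tendsto.add
        (tendsto_const_nhds : Filter.Tendsto (fun _ : ℝ => (1:ℝ)) Filter.atTop (nhds 1)) he0
      norm_num at h
      exact h
    have hg1 : Filter.Tendsto (fun A => Real.Gamma (1 + (1 - ξ A)/2)) Filter.atTop
        (nhds 1) := by
      have := hGam1.tendsto.comp h1
      rwa [Real.Gamma_one] at this
    have hg2 : Filter.Tendsto (fun A => Real.Gamma (1 + (1 - ξ A))) Filter.atTop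
        (nhds 1) := by
      have := hGam1.tendsto.comp h2
      rwa [Real.Gamma_one] at this
    have := hg1.div hg2 (by norm_num)
    norm_num at this
    exact this
  -- F11 → 1/2
  have hF11lim : Filter.Tendsto (fun A => F11 (-(1 + ξ A)/2) (1 - ξ A) (2/A))
      Filter.atTop (nhds (1/2)) := by
    have hm : Filter.Tendsto (fun A => 1 + (-(1 + ξ A))/((1 - ξ A) * A)) Filter.atTop
        (nhds (1/2)) := by
      have hnum : Filter.Tendsto (fun A => -(1 + ξ A)) Filter.atTop (nhds (-2)) := by
        have h := Filter.Tendsto.add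
          (tendsto_const_nhds : Filter.Tendsto (fun _ : ℝ => (1:ℝ)) Filter.atTop (nhds 1)) hxi1
        have h2 := h.neg
        rw [show (-(1+1):ℝ) = -2 by norm_num] at h2
        exact h2
      have h := Filter.Tendsto.add
        (tendsto_const_nhds : Filter.Tendsto (fun _ : ℝ => (1:ℝ)) Filter.atTop (nhds 1))
        (hnum.div heA4 (by norm_num))
      norm_num at h
      convert h using 2
      norm_num
    have hz2 : Filter.Tendsto (fun A : ℝ => (2/A)^2) Filter.atTop (nhds 0) := by
      have h2A : Filter.Tendsto (fun A : ℝ => 2/A) Filter.atTop (nhds 0) :=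
        tendsto_const_nhds.div_atTop tendsto_id
      have := h2A.mul h2A
      norm_num at this
      apply this.congr
      intro A
      ring
    have hdiff : Filter.Tendsto (fun A => F11 (-(1 + ξ A)/2) (1 - ξ A) (2/A)
        - (1 + (-(1 + ξ A))/((1 - ξ A) * A))) Filter.atTop (nhds 0) := by
      apply squeeze_zero_norm' _ hz2
      filter_upwards [Filter.eventually_ge_atTop (25:ℝ)] with A hA
      obtain ⟨hA0, hl0, hl8, hxp, hxl, hxsq⟩ := hgood A hA
      have he : 0 < 1 - ξ A := by linarith
      have he1 : 1 - ξ A < 1 := by linarith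
      have hz : 0 < 2/A := by positivity
      have hz2' : 2/A ≤ 1/2 := by
        rw [div_le_div_iff₀ hA0 (by norm_num)]
        linarith
      have key := F11_approx he he1 hz hz2'
      rw [Real.norm_eq_abs]
      have harg : -(1 + ξ A)/2 = -1 + (1 - ξ A)/2 := by ring
      have harg2 : (-1 + (1 - ξ A)/2)/(1 - ξ A) * (2/A) = (-(1 + ξ A))/((1 - ξ A) * A) := by
        field_simp
        ring
      rw [harg]
      rw [← harg2]
      exact key
    have h := hm.add hdiff
    norm_num at h
    apply h.congr
    intro A
    ring
  -- C → 1
  have hC1 : Filter.Tendsto C Filter.atTop (nhds 1) := by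
    have hG : Filter.Tendsto (fun A => ((1 - ξ A) * A / 2) * (A/2) ^ (-((1 - ξ A)/2)) *
        (Real.Gamma (1 + (1 - ξ A)/2) / Real.Gamma (1 + (1 - ξ A))) *
        F11 (-(1 + ξ A)/2) (1 - ξ A) (2/A)) Filter.atTop (nhds 1) := by
      have h := (((heA4.div_const 2).mul hrpow1).mul hGr).mul hF11lim
      convert h using 2
      norm_num
    apply hG.congr'
    filter_upwards [Filter.eventually_ge_atTop (25:ℝ)] with A hA
    obtain ⟨hA0, hl0, hl8, hxp, hxl, hxsq⟩ := hgood A hA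
    have he : 0 < 1 - ξ A := by linarith
    have hGpos : 0 < Real.Gamma (1 + (1 - ξ A)) := Real.Gamma_pos_of_pos (by linarith)
    have hGpos2 : 0 < Real.Gamma (1 + (1 - ξ A)/2) := Real.Gamma_pos_of_pos (by linarith)
    have hGe : Real.Gamma (1 - ξ A) = Real.Gamma (1 + (1 - ξ A)) / (1 - ξ A) := by
      rw [eq_div_iff he.ne', show (1:ℝ) + (1 - ξ A) = (1 - ξ A) + 1 by ring,
        Real.Gamma_add_one he.ne']
      ring
    have hGe2 : Real.Gamma ((1 - ξ A)/2) = Real.Gamma (1 + (1 - ξ A)/2) / ((1 - ξ A)/2) := by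
      rw [eq_div_iff (div_ne_zero he.ne' two_ne_zero),
        show (1:ℝ) + (1 - ξ A)/2 = (1 - ξ A)/2 + 1 by ring,
        Real.Gamma_add_one (div_ne_zero he.ne' two_ne_zero)]
      ring
    have hrpw : (A/2 : ℝ) ^ ((1 + ξ A)/2) = (A/2) * (A/2) ^ (-((1 - ξ A)/2)) := by
      rw [show (1 + ξ A)/2 = 1 + (-((1 - ξ A)/2)) by ring,
        Real.rpow_add (by linarith : (0:ℝ) < A/2), Real.rpow_one]
    rw [hC A, hGe, hGe2, hrpw]
    exact Eq.symm <| algebra_C (1 - ξ A) A ((A/2) ^ (-((1 - ξ A)/2))) (Real.Gamma (1 + (1 - ξ A)))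
      (Real.Gamma (1 + (1 - ξ A)/2)) (F11 (-(1 + ξ A)/2) (1 - ξ A) (2/A)) he.ne' hGpos.ne'
  -- ne-zero facts about -s
  have hns : ∀ m : ℕ, -s ≠ -(m:ℝ) := by
    intro m
    match m with
    | 0 => simpa using hs0
    | (k+1) =>
      push_cast
      exact (show -((k:ℝ)+1) < -s by linarith [Nat.cast_nonneg (α := ℝ) k]).ne'
  have hGamne : Real.Gamma (-s) ≠ 0 := Real.Gamma_ne_zero hns
  -- second term tendsto
  have hT2 : Filter.Tendsto (fun A => C A * 2 ^ s * Real.Gamma (1/2 + ξ A/2 - s) *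
      Real.Gamma (1/2 - ξ A/2 - s) / Real.Gamma (-s)) Filter.atTop
      (nhds (2 ^ s * Real.Gamma (1 - s))) := by
    have hGam1s : ContinuousAt Real.Gamma (1 - s) :=
      (Real.differentiableAt_Gamma (fun m => by
        have hm : (0:ℝ) ≤ m := Nat.cast_nonneg m
        exact (show -(m:ℝ) < 1 - s by linarith).ne')).continuousAt
    have hGamns : ContinuousAt Real.Gamma (-s) :=
      (Real.differentiableAt_Gamma hns).continuousAt
    have hg1 : Filter.Tendsto (fun A => Real.Gamma (1/2 + ξ A/2 - s)) Filter.atTop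
        (nhds (Real.Gamma (1 - s))) := by
      have harg : Filter.Tendsto (fun A => 1/2 + ξ A/2 - s) Filter.atTop (nhds (1 - s)) := by
        have h := (Filter.Tendsto.add
          (tendsto_const_nhds : Filter.Tendsto (fun _ : ℝ => (1/2:ℝ)) Filter.atTop (nhds (1/2)))
          (hxi1.div_const 2)).sub
          (tendsto_const_nhds : Filter.Tendsto (fun _ : ℝ => s) Filter.atTop (nhds s))
        convert h using 2
        norm_num
      exact hGam1s.tendsto.comp harg
    have hg2 : Filter.Tendsto (fun A => Real.Gamma (1/2 - ξ A/2 - s)) Filter.atTop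
        (nhds (Real.Gamma (-s))) := by
      have harg : Filter.Tendsto (fun A => 1/2 - ξ A/2 - s) Filter.atTop (nhds (-s)) := by
        have h := (Filter.Tendsto.sub
          (tendsto_const_nhds : Filter.Tendsto (fun _ : ℝ => (1/2:ℝ)) Filter.atTop (nhds (1/2)))
          (hxi1.div_const 2)).sub
          (tendsto_const_nhds : Filter.Tendsto (fun _ : ℝ => s) Filter.atTop (nhds s))
        convert h using 2
        norm_num
      exact hGamns.tendsto.comp harg
    have h := (((hC1.mul (tendsto_const_nhds :
        Filter.Tendsto (fun _ : ℝ => (2:ℝ) ^ s) Filter.atTop (nhds (2 ^ s)))).mul hg1).mul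
        hg2).div_const (Real.Gamma (-s))
    convert h using 2
    field_simp
  -- first term tendsto 0
  have hT1 : Filter.Tendsto (fun A => (2 * lam A * A ^ s) / (s * (s - 1) + 2 * lam A) *
      F22 1 (-s) (3/2 + ξ A/2 - s) (3/2 - ξ A/2 - s) (2/A)) Filter.atTop (nhds 0) := by
    obtain ⟨M, hM0, hMb⟩ := F22_bound hs
    have hpre : Filter.Tendsto (fun A => (2 * lam A * A ^ s) / (s * (s - 1) + 2 * lam A))
        Filter.atTop (nhds 0) := by
      have hnum : Filter.Tendsto (fun A => 2 * lam A * A ^ s) Filter.atTop (nhds 0) := by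
        have h := (hL.const_mul 2).mul (tendsto_rpow_neg_atTop h1s)
        norm_num at h
        apply h.congr'
        filter_upwards [Filter.eventually_ge_atTop (25:ℝ)] with A hA
        have hA0 : (0:ℝ) < A := by linarith
        have h' := Real.rpow_add hA0 1 (-(1-s))
        rw [Real.rpow_one, show (1:ℝ) + -(1-s) = s by ring] at h'
        rw [h']
        ring
      have hden : Filter.Tendsto (fun A => s * (s - 1) + 2 * lam A) Filter.atTop
          (nhds (s * (s - 1))) := by
        have h2l : Filter.Tendsto (fun A => 2 * lam A) Filter.atTop (nhds 0) := by
          simpa using hlam0.const_mul (2:ℝ)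
        have h := Filter.Tendsto.add
          (tendsto_const_nhds : Filter.Tendsto (fun _ : ℝ => s * (s - 1)) Filter.atTop
            (nhds (s * (s - 1)))) h2l
        simpa using h
      have hne : s * (s - 1) ≠ 0 := mul_ne_zero hs0 (sub_ne_zero.mpr hs.ne)
      have := hnum.div hden hne
      rw [zero_div] at this
      exact this
    apply squeeze_zero_norm' (a := fun A => |(2 * lam A * A ^ s) / (s * (s - 1) + 2 * lam A)| * M)
    · filter_upwards [Filter.eventually_ge_atTop (25:ℝ)] with A hA
      obtain ⟨hA0, hl0, hl8, hxp, hxl, hxsq⟩ := hgood A hA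
      rw [Real.norm_eq_abs, abs_mul]
      apply mul_le_mul_of_nonneg_left _ (abs_nonneg _)
      apply hMb
      · linarith
      · linarith
      · positivity
      · rw [div_le_div_iff₀ hA0 (by norm_num)]
        linarith
    · have := hpre.abs.mul_const M
      simpa using this
  -- conclusion
  have hsum := hT1.add hT2
  rw [zero_add] at hsum
  exact hsum.congr (fun A => (hF A).symm)
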